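/- arXiv:1909.03717 — 3 statements merged into one kernel-verified Lean document; each statement's English description precedes it below -/
import Mathlib

section
/- Let K be a finite field with q elements and M ∈ GL_n(K). The number of fixed points of M acting on Mat_n(K)^n via φ equals q^d, where d is the dimension of the eigenspace of M^T ⊗ M^T ⊗ M^{-1} for the eigenvalue 1. -/
open Matrix Kronecker

variable {K : Type*} [Field K] {n : ℕ}

/-- The multiplication of the algebra `alg(M)` on `K^n`:
`e_i * e_j = ∑ k, (M i) j k • e_k`. -/
def algMul (M : Fin n → Matrix (Fin n) (Fin n) K) (x y : Fin n → K) : Fin n → K :=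
  fun k => ∑ i, ∑ j, x i * y j * M i j k

/-- The right action `φ` of `GL n K` on tuples of matrices:
`φ(M, G)_l = G⁻¹ (∑ i, G_{il} M_i) G`. -/
def phi (M : Fin n → Matrix (Fin n) (Fin n) K) (G : GL (Fin n) K) :
    Fin n → Matrix (Fin n) (Fin n) K :=
  fun l => (↑G⁻¹ : Matrix (Fin n) (Fin n) K) *
    (∑ i, (G : Matrix (Fin n) (Fin n) K) i l • M i) * (G : Matrix (Fin n) (Fin n) K)

/-- Dimension of the eigenspace of `Mᵀ ⊗ Mᵀ ⊗ M⁻¹` for the eigenvalue 1. -/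
noncomputable def eigdim (M : GL (Fin n) K) : ℕ :=
  Module.finrank K ↥(Module.End.eigenspace (Matrix.toLin'
    ((M : Matrix (Fin n) (Fin n) K)ᵀ ⊗ₖ
      ((M : Matrix (Fin n) (Fin n) K)ᵀ ⊗ₖ (↑M⁻¹ : Matrix (Fin n) (Fin n) K)))) 1)


def vecOf : (Fin n → Matrix (Fin n) (Fin n) K) ≃ₗ[K] (Fin n × Fin n × Fin n → K) where
  toFun N := fun p => N p.1 p.2.2 p.2.1
  invFun v := fun i b a => v (i, a, b)
  map_add' _ _ := rfl
  map_smul' _ _ := rfl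
  left_inv _ := rfl
  right_inv _ := rfl

lemma entry_eq (M : GL (Fin n) K) (N : Fin n → Matrix (Fin n) (Fin n) K) (l a b : Fin n) :
    phi N M l b a
    = (((M : Matrix (Fin n) (Fin n) K)ᵀ ⊗ₖ
        ((M : Matrix (Fin n) (Fin n) K)ᵀ ⊗ₖ (↑M⁻¹ : Matrix (Fin n) (Fin n) K))).mulVec
        (vecOf N)) (l, a, b) := by
  simp only [phi, mulVec, dotProduct, Fintype.sum_prod_type, kroneckerMap_apply, transpose_apply,
    Matrix.mul_apply, Matrix.sum_apply, Matrix.smul_apply, smul_eq_mul, Finset.sum_mul,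
    Finset.mul_sum, vecOf, LinearEquiv.coe_mk]
  rw [Finset.sum_comm]
  refine Finset.sum_congr rfl fun i _ => ?_
  refine Finset.sum_congr rfl fun c _ => Finset.sum_congr rfl fun d _ => ?_
  change _ = _ * N i d c
  ring

lemma key (M : GL (Fin n) K) (N : Fin n → Matrix (Fin n) (Fin n) K) :
    phi N M = N ↔
    (vecOf N) ∈ Module.End.eigenspace (Matrix.toLin'
      ((M : Matrix (Fin n) (Fin n) K)ᵀ ⊗ₖ
        ((M : Matrix (Fin n) (Fin n) K)ᵀ ⊗ₖ (↑M⁻¹ : Matrix (Fin n) (Fin n) K)))) 1 := by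
  rw [Module.End.mem_eigenspace_iff, one_smul, Matrix.toLin'_apply]
  constructor
  · intro h
    funext p
    obtain ⟨l, a, b⟩ := p
    rw [← entry_eq M N l a b, h]
    rfl
  · intro h
    funext l
    ext b a
    rw [entry_eq M N l a b, h]
    rfl

/-- Over a finite field with `q` elements, the number of fixed points of `M` under `φ`
is `q ^ dim Eig₁(Mᵀ ⊗ Mᵀ ⊗ M⁻¹)`. -/
theorem card_fixedPoints {q : ℕ} [Fintype K] (hq : Fintype.card K = q)
    (M : GL (Fin n) K) :
    Nat.card {N : Fin n → Matrix (Fin n) (Fin n) K // phi N M = N} = q ^ eigdim M := by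
  classical
  set E := Module.End.eigenspace (Matrix.toLin'
    ((M : Matrix (Fin n) (Fin n) K)ᵀ ⊗ₖ
      ((M : Matrix (Fin n) (Fin n) K)ᵀ ⊗ₖ (↑M⁻¹ : Matrix (Fin n) (Fin n) K)))) 1 with hE
  have e : {N : Fin n → Matrix (Fin n) (Fin n) K // phi N M = N} ≃ E :=
    { toFun := fun N => ⟨vecOf N.1, (key M N.1).mp N.2⟩
      invFun := fun v => ⟨vecOf.symm v.1, by
        refine (key M _).mpr ?_
        rw [vecOf.apply_symm_apply]
        exact v.2⟩
      left_inv := fun N => by simp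
      right_inv := fun v => by simp }
  rw [Nat.card_congr e]
  haveI : Fintype E := Fintype.ofFinite E
  rw [Nat.card_eq_fintype_card, Module.card_eq_pow_finrank (K := K), hq]
  rfl
end

section
/- Over F_2, for the matrix M = [[1,1],[0,1]], the eigenspace of M^T ⊗ M^T ⊗ M^{-1} for eigenvalue 1 has dimension 4, and hence M has exactly 2⁴ = 16 fixed points in Mat_2(F_2)² under the action φ. -/
open Matrix Kronecker

variable {K : Type*} [Field K] {n : ℕ}

/-! Stored as a vector of `K^{n×n×n}`, a tuple `N` is moved by `φ(·, G)` through multiplication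
by `Gᵀ ⊗ Gᵀ ⊗ G⁻¹`, so the fixed points of `G` are the `1`-eigenspace of that matrix and there are
`|K| ^ eigdim G` of them. Over `F₂` the Jordan block `J` is an involution, and enumerating `F₂⁸`
shows that `Jᵀ ⊗ Jᵀ ⊗ J` fixes exactly `16 = 2⁴` vectors. -/

theorem Matrix.natCard_eigenspace_one {ι : Type*} [Fintype ι] [DecidableEq ι] (A : Matrix ι ι K) :
    Nat.card (Module.End.eigenspace (toLin' A) 1) = Nat.card {v // A *ᵥ v = v} :=
  Nat.card_congr <| Equiv.subtypeEquivRight fun v => by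
    rw [Module.End.mem_eigenspace_iff, toLin'_apply, one_smul]

def phiMatrix (G : GL (Fin n) K) : Matrix (Fin n × Fin n × Fin n) (Fin n × Fin n × Fin n) K :=
  (G : Matrix (Fin n) (Fin n) K)ᵀ ⊗ₖ
    ((G : Matrix (Fin n) (Fin n) K)ᵀ ⊗ₖ (↑G⁻¹ : Matrix (Fin n) (Fin n) K))

/-- Stores `(N_i)_{cd}` at the index `(i, d, c)`: this order makes `φ(·, G)` multiplication by
`phiMatrix G`. -/
@[simps]
def tupleVecEquiv : (Fin n → Matrix (Fin n) (Fin n) K) ≃ (Fin n × Fin n × Fin n → K) where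
  toFun N x := N x.1 x.2.2 x.2.1
  invFun v i c d := v (i, d, c)
  left_inv _ := rfl
  right_inv _ := rfl

theorem tupleVecEquiv_phi (N : Fin n → Matrix (Fin n) (Fin n) K) (G : GL (Fin n) K) :
    tupleVecEquiv (phi N G) = phiMatrix G *ᵥ tupleVecEquiv N := by
  ext ⟨l, b, a⟩
  simp only [tupleVecEquiv_apply, phi, phiMatrix, mulVec, dotProduct, mul_apply, Matrix.sum_apply,
    Matrix.smul_apply, smul_eq_mul, Fintype.sum_prod_type, kronecker_apply, transpose_apply,
    Finset.sum_mul, Finset.mul_sum]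
  rw [Finset.sum_comm]
  exact Fintype.sum_congr _ _ fun i => Fintype.sum_congr _ _ fun d => Fintype.sum_congr _ _ fun c =>
    by ring

theorem card_fixedPoints_phi (G : GL (Fin n) K) :
    Nat.card {N // phi N G = N} = Nat.card {v // phiMatrix G *ᵥ v = v} :=
  Nat.card_congr <| tupleVecEquiv.subtypeEquiv fun N => by
    rw [← tupleVecEquiv_phi, tupleVecEquiv.apply_eq_iff_eq]

theorem card_fixedPoints_phi_eq_pow_eigdim (G : GL (Fin n) K) :
    Nat.card {N // phi N G = N} = Nat.card K ^ eigdim G := by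
  rw [card_fixedPoints_phi, ← natCard_eigenspace_one, Module.natCard_eq_pow_finrank (K := K)]
  rfl

theorem card_fixedVec_kronecker_jordan :
    Nat.card {v // ((!![1,1;0,1] : Matrix (Fin 2) (Fin 2) (ZMod 2))ᵀ ⊗ₖ
      ((!![1,1;0,1] : Matrix (Fin 2) (Fin 2) (ZMod 2))ᵀ ⊗ₖ !![1,1;0,1])) *ᵥ v = v} = 2 ^ 4 := by
  rw [Nat.card_eq_fintype_card]
  decide

/-- For `M = [[1,1],[0,1]]` over `F₂`: `dim Eig₁(Mᵀ ⊗ Mᵀ ⊗ M⁻¹) = 4`, hence `M`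
has exactly `2⁴ = 16` fixed points under `φ`. -/
theorem jordan_block_fixedPoints :
    ∀ M : GL (Fin 2) (ZMod 2),
      (M : Matrix (Fin 2) (Fin 2) (ZMod 2)) = !![1,1;0,1] →
      eigdim M = 4 ∧
      Nat.card {N : Fin 2 → Matrix (Fin 2) (Fin 2) (ZMod 2) // phi N M = N} = 16 := by
  intro M hM
  have hinv : (↑M⁻¹ : Matrix (Fin 2) (Fin 2) (ZMod 2)) = !![1,1;0,1] := by
    have hsq : M * M = 1 := Units.ext <| by rw [Units.val_mul, hM]; decide
    rw [inv_eq_of_mul_eq_one_right hsq, hM]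
  have hcard : Nat.card {N // phi N M = N} = 2 ^ 4 := by
    rw [card_fixedPoints_phi, phiMatrix, hM, hinv]
    exact card_fixedVec_kronecker_jordan
  have heig : eigdim M = 4 := by
    apply Nat.pow_right_injective le_rfl
    change 2 ^ eigdim M = 2 ^ 4
    rw [← hcard, card_fixedPoints_phi_eq_pow_eigdim, Nat.card_zmod]
  exact ⟨heig, hcard⟩
end

section
/- Σ_{M ∈ GL_2(F_2)} 2^{dim Eig_1(M^T ⊗ M^T ⊗ M^{-1})} = 2⁸ + 3·2⁴ + 2·2² = 312, and 312 / |GL_2(F_2)| = 312 / 6 = 52. -/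
open Matrix Kronecker

variable {K : Type*} [Field K] {n : ℕ}

/-! Over a finite field with `q` elements, `q ^ dim` of an eigenspace is the number of its
vectors, so `2 ^ eigdim M` counts the vectors of `F₂⁸` fixed by `Mᵀ ⊗ Mᵀ ⊗ M⁻¹`. A direct
count over the six elements of `GL₂(F₂) ≅ S₃` gives all `2⁸` vectors for the identity, `2⁴`
for each of the three involutions and `2²` for each of the two elements of order three. -/

theorem card_pow_finrank_eigenspace {ι : Type*} [Fintype ι] [DecidableEq ι] [Fintype K]
    [DecidableEq K] (A : Matrix ι ι K) (μ : K) :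
    Fintype.card K ^ Module.finrank K (Module.End.eigenspace (Matrix.toLin' A) μ) =
      Fintype.card {x : ι → K // A *ᵥ x = μ • x} := by
  let _ := Fintype.ofFinite (Module.End.eigenspace (Matrix.toLin' A) μ)
  rw [← Module.card_eq_pow_finrank]
  exact Fintype.card_congr <| Equiv.subtypeEquivRight fun x => by
    simp [Matrix.toLin'_apply]

def tripleKron (M : GL (Fin n) K) :
    Matrix (Fin n × Fin n × Fin n) (Fin n × Fin n × Fin n) K :=
  (M : Matrix (Fin n) (Fin n) K)ᵀ ⊗ₖ
    ((M : Matrix (Fin n) (Fin n) K)ᵀ ⊗ₖ (↑M⁻¹ : Matrix (Fin n) (Fin n) K))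

theorem card_pow_eigdim [Fintype K] [DecidableEq K] (M : GL (Fin n) K) :
    Fintype.card K ^ eigdim M = Fintype.card {x // tripleKron M *ᵥ x = x} := by
  have h := card_pow_finrank_eigenspace (tripleKron M) 1
  simp only [one_smul] at h
  exact h

theorem card_fixed_tripleKron_GL_two_zmod_two :
    ∀ M : GL (Fin 2) (ZMod 2), Fintype.card {x // tripleKron M *ᵥ x = x} =
      2 ^ if M = 1 then 8 else if M ^ 2 = 1 then 4 else 2 := by
  decide +kernel

theorem eigdim_GL_two_zmod_two (M : GL (Fin 2) (ZMod 2)) :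
    eigdim M = if M = 1 then 8 else if M ^ 2 = 1 then 4 else 2 := by
  refine Nat.pow_right_injective le_rfl (?_ : 2 ^ _ = 2 ^ _)
  rw [← card_fixed_tripleKron_GL_two_zmod_two, ← card_pow_eigdim, ZMod.card]

theorem card_GL_two_zmod_two : Nat.card (GL (Fin 2) (ZMod 2)) = 6 := by
  rw [Matrix.card_GL_field]
  rfl

/-- `∑_{M ∈ GL₂(F₂)} 2^(dim Eig₁(Mᵀ⊗Mᵀ⊗M⁻¹)) = 2⁸ + 3·2⁴ + 2·2² = 312`, and
`312 / |GL₂(F₂)| = 312 / 6 = 52`. -/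
theorem burnside_sum_f2 :
    (∑ M : GL (Fin 2) (ZMod 2), 2 ^ eigdim M = 2 ^ 8 + 3 * 2 ^ 4 + 2 * 2 ^ 2) ∧
    (2 ^ 8 + 3 * 2 ^ 4 + 2 * 2 ^ 2 = 312) ∧
    Nat.card (GL (Fin 2) (ZMod 2)) = 6 ∧
    312 / Nat.card (GL (Fin 2) (ZMod 2)) = 52 := by
  refine ⟨?_, rfl, card_GL_two_zmod_two, by rw [card_GL_two_zmod_two]⟩
  simp only [eigdim_GL_two_zmod_two]
  decide +kernel
end
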